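/- arXiv:2406.00300 — 8 statements merged into one kernel-verified Lean document; each statement's English description precedes it below -/
import Mathlib

section
/- Let Ω = (a, b) be a bounded open interval in ℝ. Let u : ℝ → ℝ be twice differentiable with ∫_Ω u(t)² dt < ∞, ∫_Ω u'(t)² dt < ∞, and ∫_Ω u''(t)² dt < ∞. Let f : ℝ → ℝ be twice differentiable, q-Lipschitz continuous, and satisfy |f''(t)| ≤ ν for all t ∈ ℝ. Then ∫_Ω (f(u(t)))² dt < ∞, ∫_Ω ((f∘u)'(t))² dt < ∞, and ∫_Ω ((f∘u)''(t))² dt < ∞; that is, the composition f∘u lies in the Sobolev space W^{2,2}(Ω). -/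
open MeasureTheory Set

/-! Since `u` and `u'` are continuous, `f ∘ u` and `(f ∘ u)' = f'(u) u'` are continuous, hence
bounded on `[a, b]` and square integrable on `(a, b)`. In
`(f ∘ u)'' = f''(u) (u')² + f'(u) u''` the factors `f''(u)` and `f'(u)` are bounded, while
`(u')²` is continuous and `u''` is square integrable by assumption; by Hölder with exponents
`(∞, 2)` both products lie in `L²(a, b)`. -/

theorem ContinuousOn.memLp_isCompact {X E : Type*} [TopologicalSpace X] [MeasurableSpace X]
    [OpensMeasurableSpace X] [T2Space X] [NormedAddCommGroup E] {μ : Measure X}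
    [IsFiniteMeasureOnCompacts μ] {s : Set X} {f : X → E} {p : ENNReal} (hs : IsCompact s)
    (hf : ContinuousOn f s) : MemLp f p (μ.restrict s) := by
  have : IsFiniteMeasure (μ.restrict s) := isFiniteMeasure_restrict.2 hs.measure_ne_top
  obtain ⟨C, hC⟩ := hs.exists_bound_of_continuousOn hf
  exact .of_bound (hf.aestronglyMeasurable_of_isCompact hs hs.measurableSet) C
    ((ae_restrict_iff' hs.measurableSet).2 (ae_of_all _ hC))

section SecondDerivative

variable {𝕜 : Type*} [NontriviallyNormedField 𝕜] {f u : 𝕜 → 𝕜}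

theorem deriv_comp_eq_mul (hf : Differentiable 𝕜 f) (hu : Differentiable 𝕜 u) :
    deriv (f ∘ u) = fun t => deriv f (u t) * deriv u t :=
  funext fun t => deriv_comp t (hf (u t)) (hu t)

theorem deriv_deriv_comp_eq (hf : Differentiable 𝕜 f) (hf' : Differentiable 𝕜 (deriv f))
    (hu : Differentiable 𝕜 u) (hu' : Differentiable 𝕜 (deriv u)) :
    deriv (deriv (f ∘ u)) = fun t =>
      deriv (deriv f) (u t) * deriv u t ^ 2 + deriv f (u t) * deriv (deriv u) t := by
  rw [deriv_comp_eq_mul hf hu]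
  funext t
  have hf'u : HasDerivAt (fun s => deriv f (u s)) (deriv (deriv f) (u t) * deriv u t) t :=
    (hf' (u t)).hasDerivAt.comp t (hu t).hasDerivAt
  rw [(hf'u.fun_mul (hu' t).hasDerivAt).deriv]
  ring

end SecondDerivative

theorem stmt1_general (a b : ℝ)
    (u : ℝ → ℝ) (hu : Differentiable ℝ u) (hu' : Differentiable ℝ (deriv u))
    (hu2 : IntegrableOn (fun t => deriv (deriv u) t ^ 2) (Ioo a b))
    (f : ℝ → ℝ) (hfd : Differentiable ℝ f) (hfd' : Differentiable ℝ (deriv f))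
    (ν : ℝ)
    (hf'' : ∀ t : ℝ, |deriv (deriv f) t| ≤ ν) :
    IntegrableOn (fun t => (f (u t)) ^ 2) (Ioo a b) ∧
    IntegrableOn (fun t => deriv (f ∘ u) t ^ 2) (Ioo a b) ∧
    IntegrableOn (fun t => deriv (deriv (f ∘ u)) t ^ 2) (Ioo a b) := by
  have memLp_of_continuous {g : ℝ → ℝ} (hg : Continuous g) (p : ENNReal) :
      MemLp g p (volume.restrict (Ioo a b)) :=
    (hg.continuousOn.memLp_isCompact isCompact_Icc).mono_measure
      (Measure.restrict_mono Ioo_subset_Icc_self le_rfl)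
  have hf'u : Continuous fun t => deriv f (u t) := hfd'.continuous.comp hu.continuous
  have hf''u : MemLp (fun t => deriv (deriv f) (u t)) ⊤ (volume.restrict (Ioo a b)) :=
    memLp_top_of_bound ((measurable_deriv _).comp hu.continuous.measurable).aestronglyMeasurable
      ν (ae_of_all _ fun t => hf'' (u t))
  have hu'' : MemLp (deriv (deriv u)) 2 (volume.restrict (Ioo a b)) :=
    (memLp_two_iff_integrable_sq (measurable_deriv _).aestronglyMeasurable).2 hu2
  refine ⟨(memLp_of_continuous (hfd.continuous.comp hu.continuous) 2).integrable_sq, ?_, ?_⟩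
  · rw [deriv_comp_eq_mul hfd hu]
    exact (memLp_of_continuous (hf'u.mul hu'.continuous) 2).integrable_sq
  · rw [deriv_deriv_comp_eq hfd hfd' hu hu']
    exact (((memLp_of_continuous (hu'.continuous.pow 2) 2).mul' hf''u).add
      (hu''.mul' (memLp_of_continuous hf'u ⊤))).integrable_sq

/-- If `u : ℝ → ℝ` is twice differentiable with `u², (u')², (u'')²` integrable on the
bounded open interval `Ω = (a, b)`, and `f : ℝ → ℝ` is twice differentiable, `q`-Lipschitz with
`|f''| ≤ ν` everywhere, then `(f∘u)², ((f∘u)')², ((f∘u)'')²` are integrable on `Ω`, i.e.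
`f ∘ u ∈ W^{2,2}(Ω)`. -/
theorem stmt1 (a b : ℝ) (hab : a < b)
    (u : ℝ → ℝ) (hu : Differentiable ℝ u) (hu' : Differentiable ℝ (deriv u))
    (hu0 : IntegrableOn (fun t => u t ^ 2) (Ioo a b))
    (hu1 : IntegrableOn (fun t => deriv u t ^ 2) (Ioo a b))
    (hu2 : IntegrableOn (fun t => deriv (deriv u) t ^ 2) (Ioo a b))
    (f : ℝ → ℝ) (hfd : Differentiable ℝ f) (hfd' : Differentiable ℝ (deriv f))
    (q ν : ℝ) (hf : ∀ s t : ℝ, |f s - f t| ≤ q * |s - t|)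
    (hf'' : ∀ t : ℝ, |deriv (deriv f) t| ≤ ν) :
    IntegrableOn (fun t => (f (u t)) ^ 2) (Ioo a b) ∧
    IntegrableOn (fun t => deriv (f ∘ u) t ^ 2) (Ioo a b) ∧
    IntegrableOn (fun t => deriv (deriv (f ∘ u)) t ^ 2) (Ioo a b) :=
  stmt1_general a b u hu hu' hu2 f hfd hfd' ν hf''
end

section
/- Let Ω = (a, b) be a bounded open interval in ℝ with a < b, and let g : ℝ → ℝ be twice continuously differentiable on [a, b]. Then ∫_a^b g(t)² dt + ∫_a^b g'(t)² dt + ∫_a^b g''(t)² dt ≤ [2(b−a)·max{1, b−a}·(2·max{1, b−a}² + 1) + 1] · (g(a)² + g'(a)² + ∫_a^b g''(t)² dt). -/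
/-- Cauchy–Schwarz for interval integrals: `(∫ f)² ≤ (c - a) ∫ f²`. -/
lemma cs_aux (f : ℝ → ℝ) (a c : ℝ) (hac : a ≤ c) (hf : ContinuousOn f (Set.Icc a c)) :
    (∫ t in a..c, f t) ^ 2 ≤ (c - a) * ∫ t in a..c, f t ^ 2 := by
  rcases eq_or_lt_of_le hac with rfl | hlt
  · simp
  · set L : ℝ := c - a with hL
    have hLpos : 0 < L := by simp [hL]; linarith
    set S : ℝ := ∫ t in a..c, f t with hS
    set k : ℝ := S / L with hk
    have hfi : IntervalIntegrable f MeasureTheory.volume a c :=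
      (by rwa [Set.uIcc_of_le hac] : ContinuousOn f (Set.uIcc a c)).intervalIntegrable
    have hf2i : IntervalIntegrable (fun t => f t ^ 2) MeasureTheory.volume a c :=
      (by rw [Set.uIcc_of_le hac]; exact hf.pow 2 :
        ContinuousOn (fun t => f t ^ 2) (Set.uIcc a c)).intervalIntegrable
    have h0 : 0 ≤ ∫ t in a..c, (f t - k) ^ 2 :=
      intervalIntegral.integral_nonneg hac (fun u _ => sq_nonneg _)
    have hexp : (∫ t in a..c, (f t - k) ^ 2)
        = (∫ t in a..c, f t ^ 2) - 2 * k * S + k ^ 2 * L := by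
      have heq : ∀ t : ℝ, (f t - k) ^ 2 = (f t ^ 2 - (2 * k) * f t) + k ^ 2 := by
        intro t; ring
      simp_rw [heq]
      rw [intervalIntegral.integral_add (hf2i.sub (hfi.const_mul (2 * k)))
        intervalIntegrable_const,
        intervalIntegral.integral_sub hf2i (hfi.const_mul (2 * k)),
        intervalIntegral.integral_const_mul, intervalIntegral.integral_const]
      rw [smul_eq_mul, ← hS]
      ring
    have hkL : k * L = S := div_mul_cancel₀ S hLpos.ne'
    rw [hexp] at h0
    nlinarith [mul_nonneg hLpos.le h0, hkL, sq_nonneg (k * L - S)]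

/-- For a nonnegative continuous function, `∫_a^t f ≤ ∫_a^b f` when `t ∈ [a, b]`. -/
lemma mono_upper_aux (f : ℝ → ℝ) (a b t : ℝ) (hf : ContinuousOn f (Set.Icc a b))
    (hpos : ∀ x ∈ Set.Icc a b, 0 ≤ f x) (ht : t ∈ Set.Icc a b) :
    (∫ x in a..t, f x) ≤ ∫ x in a..b, f x := by
  have h1 : IntervalIntegrable f MeasureTheory.volume a t :=
    (by rw [Set.uIcc_of_le ht.1]; exact hf.mono (Set.Icc_subset_Icc le_rfl ht.2) :
      ContinuousOn f (Set.uIcc a t)).intervalIntegrable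
  have h2 : IntervalIntegrable f MeasureTheory.volume t b :=
    (by rw [Set.uIcc_of_le ht.2]; exact hf.mono (Set.Icc_subset_Icc ht.1 le_rfl) :
      ContinuousOn f (Set.uIcc t b)).intervalIntegrable
  have hadd := intervalIntegral.integral_add_adjacent_intervals h1 h2
  have h3 : 0 ≤ ∫ x in t..b, f x :=
    intervalIntegral.integral_nonneg ht.2 (fun u hu => hpos u ⟨le_trans ht.1 hu.1, hu.2⟩)
  linarith

/-- For `g` twice continuously differentiable on `[a, b]` (with derivatives `g'` and
`g''`), the Sobolev norm squared is bounded by the stated multiple of the Kimeldorf–Wahba norm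
squared. -/
theorem stmt2 (a b : ℝ) (hab : a < b) (g g' g'' : ℝ → ℝ)
    (hg' : ∀ t ∈ Set.Icc a b, HasDerivAt g (g' t) t)
    (hg'' : ∀ t ∈ Set.Icc a b, HasDerivAt g' (g'' t) t)
    (hc : ContinuousOn g'' (Set.Icc a b)) :
    (∫ t in a..b, g t ^ 2) + (∫ t in a..b, g' t ^ 2) + (∫ t in a..b, g'' t ^ 2) ≤
      (2 * (b - a) * max 1 (b - a) * (2 * max 1 (b - a) ^ 2 + 1) + 1) *
        (g a ^ 2 + g' a ^ 2 + ∫ t in a..b, g'' t ^ 2) := by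
  have ha : a ∈ Set.Icc a b := ⟨le_rfl, hab.le⟩
  set M : ℝ := max 1 (b - a) with hM
  have hM1 : (1 : ℝ) ≤ M := le_max_left _ _
  have hMba : b - a ≤ M := le_max_right _ _
  have hL : (0 : ℝ) ≤ b - a := by linarith
  -- continuity of g and g' on [a,b]
  have hgc : ContinuousOn g (Set.Icc a b) := fun t ht => (hg' t ht).continuousAt.continuousWithinAt
  have hg'c : ContinuousOn g' (Set.Icc a b) := fun t ht => (hg'' t ht).continuousAt.continuousWithinAt
  set I2 : ℝ := ∫ t in a..b, g'' t ^ 2 with hI2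
  set J : ℝ := ∫ t in a..b, g' t ^ 2 with hJ
  set IG : ℝ := ∫ t in a..b, g t ^ 2 with hIG
  have hI2nn : 0 ≤ I2 := intervalIntegral.integral_nonneg hab.le (fun u _ => sq_nonneg _)
  have hJnn : 0 ≤ J := intervalIntegral.integral_nonneg hab.le (fun u _ => sq_nonneg _)
  -- pointwise bound on g'
  have key' : ∀ t ∈ Set.Icc a b, g' t ^ 2 ≤ 2 * g' a ^ 2 + 2 * (b - a) * I2 := by
    intro t ht
    have hsub : Set.Icc a t ⊆ Set.Icc a b := Set.Icc_subset_Icc le_rfl ht.2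
    have hcc : ContinuousOn g'' (Set.Icc a t) := hc.mono hsub
    have hft : (∫ s in a..t, g'' s) = g' t - g' a :=
      intervalIntegral.integral_eq_sub_of_hasDerivAt
        (fun x hx => hg'' x (hsub (by rwa [Set.uIcc_of_le ht.1] at hx)))
        ((by rwa [Set.uIcc_of_le ht.1] : ContinuousOn g'' (Set.uIcc a t)).intervalIntegrable)
    have hcs : (∫ s in a..t, g'' s) ^ 2 ≤ (t - a) * ∫ s in a..t, g'' s ^ 2 :=
      cs_aux g'' a t ht.1 hcc
    have hmono : (∫ s in a..t, g'' s ^ 2) ≤ I2 :=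
      mono_upper_aux (fun s => g'' s ^ 2) a b t (hc.pow 2) (fun x _ => sq_nonneg _) ht
    have hintnn : 0 ≤ ∫ s in a..t, g'' s ^ 2 :=
      intervalIntegral.integral_nonneg ht.1 (fun u _ => sq_nonneg _)
    have hS2 : (∫ s in a..t, g'' s) ^ 2 ≤ (b - a) * I2 := by
      calc (∫ s in a..t, g'' s) ^ 2 ≤ (t - a) * ∫ s in a..t, g'' s ^ 2 := hcs
        _ ≤ (b - a) * ∫ s in a..t, g'' s ^ 2 := by
            apply mul_le_mul_of_nonneg_right _ hintnn; linarith [ht.2]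
        _ ≤ (b - a) * I2 := mul_le_mul_of_nonneg_left hmono hL
    have hgt : g' t = g' a + ∫ s in a..t, g'' s := by linarith
    rw [hgt]
    nlinarith [sq_nonneg (g' a - ∫ s in a..t, g'' s), hS2]
  -- pointwise bound on g
  have key : ∀ t ∈ Set.Icc a b, g t ^ 2 ≤ 2 * g a ^ 2 + 2 * (b - a) * J := by
    intro t ht
    have hsub : Set.Icc a t ⊆ Set.Icc a b := Set.Icc_subset_Icc le_rfl ht.2
    have hcc : ContinuousOn g' (Set.Icc a t) := hg'c.mono hsub
    have hft : (∫ s in a..t, g' s) = g t - g a :=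
      intervalIntegral.integral_eq_sub_of_hasDerivAt
        (fun x hx => hg' x (hsub (by rwa [Set.uIcc_of_le ht.1] at hx)))
        ((by rwa [Set.uIcc_of_le ht.1] : ContinuousOn g' (Set.uIcc a t)).intervalIntegrable)
    have hcs : (∫ s in a..t, g' s) ^ 2 ≤ (t - a) * ∫ s in a..t, g' s ^ 2 :=
      cs_aux g' a t ht.1 hcc
    have hmono : (∫ s in a..t, g' s ^ 2) ≤ J :=
      mono_upper_aux (fun s => g' s ^ 2) a b t (hg'c.pow 2) (fun x _ => sq_nonneg _) ht
    have hintnn : 0 ≤ ∫ s in a..t, g' s ^ 2 :=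
      intervalIntegral.integral_nonneg ht.1 (fun u _ => sq_nonneg _)
    have hS2 : (∫ s in a..t, g' s) ^ 2 ≤ (b - a) * J := by
      calc (∫ s in a..t, g' s) ^ 2 ≤ (t - a) * ∫ s in a..t, g' s ^ 2 := hcs
        _ ≤ (b - a) * ∫ s in a..t, g' s ^ 2 := by
            apply mul_le_mul_of_nonneg_right _ hintnn; linarith [ht.2]
        _ ≤ (b - a) * J := mul_le_mul_of_nonneg_left hmono hL
    have hgt : g t = g a + ∫ s in a..t, g' s := by linarith
    rw [hgt]
    nlinarith [sq_nonneg (g a - ∫ s in a..t, g' s), hS2]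
  -- integral bounds
  have hJ' : J ≤ (b - a) * (2 * g' a ^ 2 + 2 * (b - a) * I2) := by
    have hi : IntervalIntegrable (fun t => g' t ^ 2) MeasureTheory.volume a b :=
      (by rw [Set.uIcc_of_le hab.le]; exact hg'c.pow 2 :
        ContinuousOn (fun t => g' t ^ 2) (Set.uIcc a b)).intervalIntegrable
    have := intervalIntegral.integral_mono_on hab.le hi intervalIntegrable_const key'
    rwa [intervalIntegral.integral_const, smul_eq_mul] at this
  have hIG' : IG ≤ (b - a) * (2 * g a ^ 2 + 2 * (b - a) * J) := by
    have hi : IntervalIntegrable (fun t => g t ^ 2) MeasureTheory.volume a b :=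
      (by rw [Set.uIcc_of_le hab.le]; exact hgc.pow 2 :
        ContinuousOn (fun t => g t ^ 2) (Set.uIcc a b)).intervalIntegrable
    have := intervalIntegral.integral_mono_on hab.le hi intervalIntegrable_const key
    rwa [intervalIntegral.integral_const, smul_eq_mul] at this
  -- assemble
  set L : ℝ := b - a with hLdef
  have hMnn : (0 : ℝ) ≤ M := le_trans zero_le_one hM1
  have hA : 0 ≤ g a ^ 2 := sq_nonneg _
  have hB : 0 ≤ g' a ^ 2 := sq_nonneg _
  have s1 : J ≤ 2 * L * M * (g' a ^ 2 + I2) := by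
    nlinarith [hJ', mul_le_mul_of_nonneg_right hM1 (mul_nonneg hL hB),
      mul_le_mul_of_nonneg_left hMba (mul_nonneg hL hI2nn)]
  have hL2 : L ^ 2 ≤ M ^ 2 := by nlinarith [hMba, hL]
  have s3 : L ^ 2 * J ≤ M ^ 2 * J := mul_le_mul_of_nonneg_right hL2 hJnn
  have s4 : M ^ 2 * J ≤ M ^ 2 * (2 * L * M * (g' a ^ 2 + I2)) :=
    mul_le_mul_of_nonneg_left s1 (sq_nonneg M)
  have s5 : IG ≤ 2 * L * (g a ^ 2) + 2 * L ^ 2 * J := by nlinarith [hIG']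
  nlinarith [s1, s3, s4, s5, hI2nn, hJnn, hA, hB,
    mul_le_mul_of_nonneg_right hM1 (mul_nonneg hL hA),
    mul_nonneg (mul_nonneg (mul_nonneg hL hMnn) (mul_nonneg hMnn hMnn)) hA]
end

section
/- Let Ω = (a, b) be a bounded open interval in ℝ with a < b, and let g : ℝ → ℝ be twice continuously differentiable on [a, b]. Then g(a)² + g'(a)² + ∫_a^b g''(t)² dt ≤ ((4/(b−a))·max{1, b−a}² + 1) · (∫_a^b g(t)² dt + ∫_a^b g'(t)² dt + ∫_a^b g''(t)² dt). -/
open intervalIntegral in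
/-- Auxiliary: for `f` C¹ on `[a,b]`,
`f a ^ 2 ≤ 2/(b-a) ∫ f² + 2(b-a) ∫ (f')²`. -/
lemma sq_eval_le_aux (a b : ℝ) (hab : a < b) (f f' : ℝ → ℝ)
    (hf : ∀ t ∈ Set.Icc a b, HasDerivAt f (f' t) t)
    (hcf : ContinuousOn f (Set.Icc a b)) (hcf' : ContinuousOn f' (Set.Icc a b)) :
    f a ^ 2 ≤ 2 / (b - a) * (∫ t in a..b, f t ^ 2) + 2 * (b - a) * ∫ t in a..b, f' t ^ 2 := by
  have hb : (0:ℝ) < b - a := by linarith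
  set I := ∫ t in a..b, f t ^ 2 with hI
  set J := ∫ t in a..b, f' t ^ 2 with hJ
  set S := ∫ t in a..b, |f' t| with hS
  have hicc : Set.uIcc a b = Set.Icc a b := Set.uIcc_of_le hab.le
  have hint' : IntervalIntegrable f' MeasureTheory.volume a b :=
    (hicc ▸ hcf').intervalIntegrable
  have hintabs : IntervalIntegrable (fun t => |f' t|) MeasureTheory.volume a b :=
    hint'.abs
  have hintJ : IntervalIntegrable (fun t => f' t ^ 2) MeasureTheory.volume a b :=
    ((hicc ▸ hcf').pow 2).intervalIntegrable
  have hintI : IntervalIntegrable (fun t => f t ^ 2) MeasureTheory.volume a b :=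
    ((hicc ▸ hcf).pow 2).intervalIntegrable
  have hJ0 : 0 ≤ J := integral_nonneg hab.le (fun u _ => sq_nonneg _)
  have hS0 : 0 ≤ S := integral_nonneg hab.le (fun u _ => abs_nonneg _)
  -- Cauchy–Schwarz via the quadratic trick with λ = S/(b-a)
  have hCS : S ^ 2 ≤ (b - a) * J := by
    set l := S / (b - a) with hl
    have key : ∫ t in a..b, 2 * l * |f' t| ≤ ∫ t in a..b, (l ^ 2 + f' t ^ 2) := by
      apply integral_mono_on hab.le (hintabs.const_mul _)
        (IntervalIntegrable.add (intervalIntegrable_const) hintJ)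
      intro t _
      have := two_mul_le_add_sq l |f' t|
      have habs : |f' t| ^ 2 = f' t ^ 2 := sq_abs _
      nlinarith
    rw [integral_const_mul, intervalIntegral.integral_add intervalIntegrable_const hintJ,
      integral_const] at key
    simp only [smul_eq_mul] at key
    have key2 : 2 * (S / (b - a)) * S ≤ (b - a) * (S / (b - a)) ^ 2 + J := by
      simpa [hl] using key
    have h1 : (b - a) * (S / (b - a)) ^ 2 = S ^ 2 / (b - a) := by
      field_simp
    have h2 : 2 * (S / (b - a)) * S = 2 * (S ^ 2 / (b - a)) := by
      field_simp
    rw [h1, h2] at key2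
    have h3 : S ^ 2 / (b - a) ≤ J := by linarith
    calc S ^ 2 = S ^ 2 / (b - a) * (b - a) := by field_simp
    _ ≤ J * (b - a) := by nlinarith
    _ = (b - a) * J := by ring
  -- pointwise bound
  have hpt : ∀ t ∈ Set.Icc a b, f a ^ 2 ≤ 2 * f t ^ 2 + 2 * ((b - a) * J) := by
    intro t ht
    have hftc : ∫ s in a..t, f' s = f t - f a := by
      apply integral_eq_sub_of_hasDerivAt
      · intro s hs
        apply hf
        rw [Set.uIcc_of_le ht.1] at hs
        exact ⟨hs.1, hs.2.trans ht.2⟩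
      · exact hint'.mono_set (by rw [hicc, Set.uIcc_of_le ht.1]; exact Set.Icc_subset_Icc le_rfl ht.2)
    set D := ∫ s in a..t, f' s with hD
    have hDabs : |D| ≤ S := by
      calc |D| ≤ ∫ s in a..t, |f' s| := abs_integral_le_integral_abs ht.1
      _ ≤ S := integral_mono_interval le_rfl ht.1 ht.2
            (MeasureTheory.ae_of_all _ fun s => abs_nonneg _) hintabs
    have hD2 : D ^ 2 ≤ (b - a) * J := by
      calc D ^ 2 = |D| ^ 2 := (sq_abs _).symm
      _ ≤ S ^ 2 := by nlinarith [abs_nonneg D]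
      _ ≤ (b - a) * J := hCS
    have hfa : f a = f t - D := by rw [hftc]; ring
    rw [hfa]
    nlinarith [sq_nonneg (f t + D)]
  -- integrate the pointwise bound
  have hmono : ∫ _ in a..b, f a ^ 2 ≤ ∫ t in a..b, (2 * f t ^ 2 + 2 * ((b - a) * J)) := by
    apply integral_mono_on hab.le intervalIntegrable_const
      (IntervalIntegrable.add (hintI.const_mul _) intervalIntegrable_const) hpt
  rw [integral_const, intervalIntegral.integral_add (hintI.const_mul _) intervalIntegrable_const,
    integral_const_mul, integral_const] at hmono
  simp only [smul_eq_mul] at hmono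
  -- hmono : (b-a) * f a ^ 2 ≤ 2 * I + (b-a) * (2 * ((b-a)*J))
  rw [div_eq_mul_inv]
  have hinv : (b - a) * (b - a)⁻¹ = 1 := mul_inv_cancel₀ (ne_of_gt hb)
  have hinv0 : 0 < (b - a)⁻¹ := inv_pos.mpr hb
  nlinarith [mul_le_mul_of_nonneg_right hmono (le_of_lt hinv0)]

/-- For `g` twice continuously differentiable on `[a, b]`, the Kimeldorf–Wahba norm
squared is bounded by the stated multiple of the Sobolev norm squared. -/
theorem stmt3 (a b : ℝ) (hab : a < b) (g g' g'' : ℝ → ℝ)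
    (hg' : ∀ t ∈ Set.Icc a b, HasDerivAt g (g' t) t)
    (hg'' : ∀ t ∈ Set.Icc a b, HasDerivAt g' (g'' t) t)
    (hc : ContinuousOn g'' (Set.Icc a b)) :
    g a ^ 2 + g' a ^ 2 + (∫ t in a..b, g'' t ^ 2) ≤
      (4 / (b - a) * max 1 (b - a) ^ 2 + 1) *
        ((∫ t in a..b, g t ^ 2) + (∫ t in a..b, g' t ^ 2) + (∫ t in a..b, g'' t ^ 2)) := by
  have hb : (0:ℝ) < b - a := by linarith
  have hcg : ContinuousOn g (Set.Icc a b) :=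
    fun t ht => (hg' t ht).continuousAt.continuousWithinAt
  have hcg' : ContinuousOn g' (Set.Icc a b) :=
    fun t ht => (hg'' t ht).continuousAt.continuousWithinAt
  set I0 := ∫ t in a..b, g t ^ 2 with hI0
  set I1 := ∫ t in a..b, g' t ^ 2 with hI1
  set I2 := ∫ t in a..b, g'' t ^ 2 with hI2
  have h0 : 0 ≤ I0 := intervalIntegral.integral_nonneg hab.le (fun u _ => sq_nonneg _)
  have h1 : 0 ≤ I1 := intervalIntegral.integral_nonneg hab.le (fun u _ => sq_nonneg _)
  have h2 : 0 ≤ I2 := intervalIntegral.integral_nonneg hab.le (fun u _ => sq_nonneg _)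
  have e1 : g a ^ 2 ≤ 2 / (b - a) * I0 + 2 * (b - a) * I1 :=
    sq_eval_le_aux a b hab g g' hg' hcg hcg'
  have e2 : g' a ^ 2 ≤ 2 / (b - a) * I1 + 2 * (b - a) * I2 :=
    sq_eval_le_aux a b hab g' g'' hg'' hcg' hc
  set M := max 1 (b - a) with hM
  have hM1 : (1:ℝ) ≤ M := le_max_left _ _
  have hM2 : b - a ≤ M := le_max_right _ _
  rw [div_eq_mul_inv] at e1 e2 ⊢
  have hinv : (b - a) * (b - a)⁻¹ = 1 := mul_inv_cancel₀ (ne_of_gt hb)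
  have hinv0 : 0 < (b - a)⁻¹ := inv_pos.mpr hb
  -- need: 2/(b-a)(I0+I1) + 2(b-a)(I1+I2) + I2 ≤ (4 M²/(b-a) + 1)(I0+I1+I2)
  nlinarith [mul_nonneg (mul_nonneg h0 (by linarith : (0:ℝ) ≤ M)) hinv0.le,
    mul_nonneg h0 hinv0.le, mul_nonneg h1 hinv0.le, mul_nonneg h2 hinv0.le,
    mul_le_mul_of_nonneg_left hM2 hb.le,
    sq_nonneg (M - (b - a)), sq_nonneg (M - 1), mul_pos hb hinv0,
    mul_nonneg (mul_nonneg h1 hinv0.le) (sq_nonneg (M-1)),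
    mul_nonneg (mul_nonneg h0 hinv0.le) (sq_nonneg (M-1)),
    mul_nonneg (mul_nonneg h2 hinv0.le) (sq_nonneg (M-(b-a))),
    mul_nonneg (mul_nonneg h1 hinv0.le) (sq_nonneg (M-(b-a))),
    mul_nonneg (mul_nonneg h2 hinv0.le) (mul_nonneg (sub_nonneg.mpr hM2) (sub_nonneg.mpr hM1)),
    mul_nonneg h2 (by nlinarith : (0:ℝ) ≤ M ^ 2 - 1)]
end

section
/- Let Ω = (a, b) be a bounded open interval in ℝ of length L = b − a, and let g : ℝ → ℝ be continuously differentiable on [a, b] with ‖g'‖_{L²(Ω)} > 0. If ‖g‖_{L²(Ω)} / ‖g'‖_{L²(Ω)} < L, then sup_{t ∈ Ω} |g(t)| ≤ 2·√(‖g‖_{L²(Ω)} · ‖g'‖_{L²(Ω)}). -/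
/-!
By the mean value theorem for integrals, `g ^ 2` takes the value `‖g‖² / L` at some `s ∈ Ω`,
and `‖g‖ < L ‖g'‖` makes this at most `‖g‖ ‖g'‖`. The fundamental theorem of calculus for `g ^ 2`
and the Cauchy–Schwarz inequality give `g t ^ 2 - g s ^ 2 ≤ 2 ‖g‖ ‖g'‖`, so
`g t ^ 2 ≤ 3 ‖g‖ ‖g'‖`.
-/

open MeasureTheory Set
open scoped Interval

theorem integral_abs_mul_le_sqrt_mul_sqrt {α : Type*} [MeasurableSpace α] {μ : Measure α}
    {f h : α → ℝ} (hf : MemLp f 2 μ) (hh : MemLp h 2 μ) :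
    ∫ x, |f x * h x| ∂μ ≤ √(∫ x, f x ^ 2 ∂μ) * √(∫ x, h x ^ 2 ∂μ) := by
  have holder := integral_mul_le_Lp_mul_Lq_of_nonneg Real.HolderConjugate.two_two
    (Filter.Eventually.of_forall fun x => abs_nonneg (f x))
    (Filter.Eventually.of_forall fun x => abs_nonneg (h x))
    (by rw [ENNReal.ofReal_ofNat]; exact hf.abs) (by rw [ENNReal.ofReal_ofNat]; exact hh.abs)
  simp only [Real.rpow_two, sq_abs] at holder
  simpa only [abs_mul, Real.sqrt_eq_rpow] using holder

theorem ContinuousOn.memLp_two_restrict_Ioc {a b : ℝ} {f : ℝ → ℝ}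
    (hf : ContinuousOn f (Icc a b)) : MemLp f 2 (volume.restrict (Ioc a b)) :=
  (memLp_two_iff_integrable_sq
      (hf.integrableOn_Icc.mono_set Ioc_subset_Icc_self).aestronglyMeasurable).mpr
    ((hf.pow 2).integrableOn_Icc.mono_set Ioc_subset_Icc_self)

namespace intervalIntegral

variable {a b : ℝ} {f h : ℝ → ℝ}

theorem integral_abs_mul_le_sqrt_mul_sqrt (hab : a ≤ b) (hf : ContinuousOn f (Icc a b))
    (hh : ContinuousOn h (Icc a b)) :
    ∫ x in a..b, |f x * h x| ≤ √(∫ x in a..b, f x ^ 2) * √(∫ x in a..b, h x ^ 2) := by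
  simp only [integral_of_le hab]
  exact _root_.integral_abs_mul_le_sqrt_mul_sqrt hf.memLp_two_restrict_Ioc
    hh.memLp_two_restrict_Ioc

theorem abs_integral_le_integral_abs_of_mem_Icc {s t : ℝ} (hs : s ∈ Icc a b) (ht : t ∈ Icc a b)
    (hf : IntervalIntegrable f volume a b) :
    |∫ x in s..t, f x| ≤ ∫ x in a..b, |f x| := by
  have hab : a ≤ b := hs.1.trans hs.2
  have hsub : Ι s t ⊆ Ι a b :=
    uIoc_subset_uIoc_of_uIcc_subset_uIcc ((uIcc_of_le hab).symm ▸ uIcc_subset_Icc hs ht)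
  calc |∫ x in s..t, f x| ≤ ∫ x in Ι s t, |f x| :=
        norm_integral_le_integral_norm_uIoc (f := f)
    _ ≤ ∫ x in Ι a b, |f x| :=
        setIntegral_mono_set (intervalIntegrable_iff.mp hf).abs
          (Filter.Eventually.of_forall fun x => abs_nonneg (f x)) hsub.eventuallyLE
    _ = ∫ x in a..b, |f x| := by rw [uIoc_of_le hab, integral_of_le hab]

end intervalIntegral

theorem sq_sub_sq_le_of_hasDerivAt {a b s t : ℝ} {g g' : ℝ → ℝ}
    (hg : ∀ x ∈ Icc a b, HasDerivAt g (g' x) x) (hg' : ContinuousOn g' (Icc a b))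
    (hs : s ∈ Icc a b) (ht : t ∈ Icc a b) :
    g t ^ 2 - g s ^ 2 ≤ 2 * (√(∫ x in a..b, g x ^ 2) * √(∫ x in a..b, g' x ^ 2)) := by
  have hab : a ≤ b := hs.1.trans hs.2
  have hgc : ContinuousOn g (Icc a b) := fun x hx => (hg x hx).continuousAt.continuousWithinAt
  have hderiv : ContinuousOn (fun x => 2 * (g x * g' x)) (Icc a b) :=
    continuousOn_const.mul (hgc.mul hg')
  have hsub : [[s, t]] ⊆ Icc a b := uIcc_subset_Icc hs ht
  have hftc : ∫ x in s..t, 2 * (g x * g' x) = g t ^ 2 - g s ^ 2 :=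
    intervalIntegral.integral_eq_sub_of_hasDerivAt (f := fun x => g x ^ 2)
      (fun x hx => ((hg x (hsub hx)).fun_pow 2).congr_deriv (by push_cast; ring))
      (hderiv.mono hsub).intervalIntegrable
  calc g t ^ 2 - g s ^ 2 = ∫ x in s..t, 2 * (g x * g' x) := hftc.symm
    _ ≤ |∫ x in s..t, 2 * (g x * g' x)| := le_abs_self _
    _ ≤ ∫ x in a..b, |2 * (g x * g' x)| :=
        intervalIntegral.abs_integral_le_integral_abs_of_mem_Icc hs ht
          (hderiv.mono (uIcc_of_le hab).subset).intervalIntegrable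
    _ = 2 * ∫ x in a..b, |g x * g' x| := by
        simp only [abs_mul, abs_two, intervalIntegral.integral_const_mul]
    _ ≤ 2 * (√(∫ x in a..b, g x ^ 2) * √(∫ x in a..b, g' x ^ 2)) := by
        gcongr
        exact intervalIntegral.integral_abs_mul_le_sqrt_mul_sqrt hab hgc hg'

/-- For `g` continuously differentiable on `[a, b]` with `‖g'‖_{L²} > 0` and
`‖g‖_{L²}/‖g'‖_{L²} < b − a`, one has `sup_{t ∈ (a,b)} |g(t)| ≤ 2·√(‖g‖_{L²}·‖g'‖_{L²})`. -/
theorem stmt5 (a b : ℝ) (hab : a < b) (g g' : ℝ → ℝ)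
    (hg' : ∀ t ∈ Set.Icc a b, HasDerivAt g (g' t) t)
    (hc : ContinuousOn g' (Set.Icc a b))
    (hpos : 0 < Real.sqrt (∫ t in a..b, g' t ^ 2))
    (hratio : Real.sqrt (∫ t in a..b, g t ^ 2) / Real.sqrt (∫ t in a..b, g' t ^ 2) < b - a) :
    ∀ t ∈ Set.Ioo a b,
      |g t| ≤ 2 * Real.sqrt
        (Real.sqrt (∫ s in a..b, g s ^ 2) * Real.sqrt (∫ s in a..b, g' s ^ 2)) := by
  intro t ht
  set N := √(∫ s in a..b, g s ^ 2)
  set D := √(∫ s in a..b, g' s ^ 2)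
  have hN : 0 ≤ N := Real.sqrt_nonneg _
  have hN_sq : N ^ 2 = ∫ x in a..b, g x ^ 2 :=
    Real.sq_sqrt (intervalIntegral.integral_nonneg hab.le fun x _ => sq_nonneg (g x))
  have hIcc : [[a, b]] = Icc a b := uIcc_of_le hab.le
  have hgc : ContinuousOn g (Icc a b) := fun x hx => (hg' x hx).continuousAt.continuousWithinAt
  obtain ⟨s, hs, hgs⟩ := exists_eq_interval_average (f := fun x => g x ^ 2) hab.ne
    ((hgc.pow 2).mono hIcc.subset)
  have hgs_le : g s ^ 2 ≤ N * D := by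
    rw [hgs, interval_average_eq_div, ← hN_sq, div_le_iff₀ (sub_pos.mpr hab)]
    calc N ^ 2 = N * N := sq N
      _ ≤ N * ((b - a) * D) := by gcongr; exact ((div_lt_iff₀ hpos).mp hratio).le
      _ = N * D * (b - a) := by ring
  have hgt := sq_sub_sq_le_of_hasDerivAt hg' hc
    (hIcc.subset (uIoo_subset_uIcc_self hs)) (Ioo_subset_Icc_self ht)
  refine abs_le_of_sq_le_sq ?_ (by positivity)
  rw [mul_pow, Real.sq_sqrt (mul_nonneg hN hpos.le)]
  linarith [mul_nonneg hN hpos.le]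
end

section
/- Let g : ℝ → ℝ be continuously differentiable on [−1, 1]. Then sup_{t ∈ (−1,1)} |g(t)| ≤ (∫_{−1}^1 g(t)² dt)^{1/2} + (∫_{−1}^1 g'(t)² dt)^{1/2}. -/
open MeasureTheory intervalIntegral

/-- Cauchy–Schwarz for interval integrals: `(∫ f)² ≤ (v − u) ∫ f²`. -/
lemma cs_aux_s7 {f : ℝ → ℝ} {u v : ℝ} (huv : u ≤ v)
    (hi : IntervalIntegrable f volume u v)
    (hi2 : IntervalIntegrable (fun x => f x ^ 2) volume u v) :
    (∫ x in u..v, f x) ^ 2 ≤ (v - u) * ∫ x in u..v, f x ^ 2 := by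
  rcases eq_or_lt_of_le huv with rfl | hlt
  · simp
  set L : ℝ := v - u with hL
  set B : ℝ := ∫ x in u..v, f x with hB
  set A : ℝ := ∫ x in u..v, f x ^ 2 with hA
  have hLpos : 0 < L := by simp [hL]; linarith
  have key : 0 ≤ ∫ x in u..v, (L * f x - B) ^ 2 :=
    intervalIntegral.integral_nonneg huv (fun x _ => sq_nonneg _)
  have expand : (∫ x in u..v, (L * f x - B) ^ 2)
      = L ^ 2 * A - (2 * L * B) * B + B ^ 2 * L := by
    have h1 : ∀ x, (L * f x - B) ^ 2
        = L ^ 2 * f x ^ 2 - (2 * L * B) * f x + B ^ 2 := fun x => by ring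
    simp_rw [h1]
    rw [intervalIntegral.integral_add ((hi2.const_mul _).sub (hi.const_mul _))
        intervalIntegrable_const,
      intervalIntegral.integral_sub (hi2.const_mul _) (hi.const_mul _),
      intervalIntegral.integral_const_mul, intervalIntegral.integral_const_mul,
      intervalIntegral.integral_const]
    simp only [smul_eq_mul, ← hA, ← hB, ← hL]
    ring
  rw [expand] at key
  nlinarith [key, hLpos, sq_nonneg B]

/-- For `g` continuously differentiable on `[−1, 1]`,
`sup_{t ∈ (−1,1)} |g(t)| ≤ ‖g‖_{L²} + ‖g'‖_{L²}`. -/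
theorem stmt7 (g g' : ℝ → ℝ)
    (hg' : ∀ t ∈ Set.Icc (-1 : ℝ) 1, HasDerivAt g (g' t) t)
    (hc : ContinuousOn g' (Set.Icc (-1 : ℝ) 1)) :
    ∀ t ∈ Set.Ioo (-1 : ℝ) 1,
      |g t| ≤ Real.sqrt (∫ s in (-1 : ℝ)..1, g s ^ 2) +
        Real.sqrt (∫ s in (-1 : ℝ)..1, g' s ^ 2) := by
  intro t ht
  obtain ⟨ht1, ht2⟩ := ht
  -- choose a window [a, a+1] ⊆ [-1,1] containing t
  set a : ℝ := if t ≤ 0 then t else t - 1 with ha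
  have h1 : (-1 : ℝ) ≤ a := by rw [ha]; split <;> linarith
  have h2 : a + 1 ≤ 1 := by rw [ha]; split <;> linarith
  have h3 : a ≤ t := by rw [ha]; split <;> linarith
  have h4 : t ≤ a + 1 := by rw [ha]; split <;> linarith
  have hsub : Set.Icc a (a + 1) ⊆ Set.Icc (-1 : ℝ) 1 := Set.Icc_subset_Icc h1 h2
  have hgc : ContinuousOn g (Set.Icc (-1 : ℝ) 1) :=
    fun x hx => ((hg' x hx).continuousAt).continuousWithinAt
  have hg2cont : ContinuousOn (fun x => g x ^ 2) (Set.Icc (-1 : ℝ) 1) := hgc.pow 2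
  have hg'2cont : ContinuousOn (fun x => g' x ^ 2) (Set.Icc (-1 : ℝ) 1) := hc.pow 2
  have huIcc : Set.uIcc (-1 : ℝ) 1 = Set.Icc (-1 : ℝ) 1 := Set.uIcc_of_le (by norm_num)
  have hint_g2 : IntervalIntegrable (fun x => g x ^ 2) volume (-1) 1 :=
    (huIcc ▸ hg2cont).intervalIntegrable
  have hint_g'2 : IntervalIntegrable (fun x => g' x ^ 2) volume (-1) 1 :=
    (huIcc ▸ hg'2cont).intervalIntegrable
  -- find a point s in the window where g² is minimal
  obtain ⟨s, hs, hmin⟩ := (isCompact_Icc (a := a) (b := a + 1)).exists_isMinOn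
    (Set.nonempty_Icc.mpr (by linarith)) (hg2cont.mono hsub)
  have hmin' : ∀ x ∈ Set.Icc a (a + 1), g s ^ 2 ≤ g x ^ 2 := fun x hx => hmin hx
  -- g s² ≤ ∫ over the window
  have huIcc2 : Set.uIcc a (a + 1) = Set.Icc a (a + 1) := Set.uIcc_of_le (by linarith)
  have hwin_int : IntervalIntegrable (fun x => g x ^ 2) volume a (a + 1) :=
    (huIcc2 ▸ hg2cont.mono hsub).intervalIntegrable
  have hgs2 : g s ^ 2 ≤ ∫ x in a..(a + 1), g x ^ 2 := by
    have hmono : (∫ _ in a..(a + 1), g s ^ 2) ≤ ∫ x in a..(a + 1), g x ^ 2 :=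
      intervalIntegral.integral_mono_on (by linarith) intervalIntegrable_const hwin_int
        hmin'
    simpa using hmono
  have hwin_le : (∫ x in a..(a + 1), g x ^ 2) ≤ ∫ x in (-1 : ℝ)..1, g x ^ 2 :=
    intervalIntegral.integral_mono_interval h1 (by linarith) h2
      (Filter.Eventually.of_forall fun x => sq_nonneg _) hint_g2
  have hgs_le : |g s| ≤ Real.sqrt (∫ x in (-1 : ℝ)..1, g x ^ 2) := by
    rw [← Real.sqrt_sq_eq_abs]
    exact Real.sqrt_le_sqrt (le_trans hgs2 hwin_le)
  -- FTC
  have hst : Set.uIcc s t ⊆ Set.Icc a (a + 1) := Set.uIcc_subset_Icc hs ⟨h3, h4⟩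
  have hg'int_st : IntervalIntegrable g' volume s t :=
    (hc.mono (hst.trans hsub)).intervalIntegrable
  have hg'2int_st : IntervalIntegrable (fun x => g' x ^ 2) volume s t :=
    (hg'2cont.mono (hst.trans hsub)).intervalIntegrable
  have hftc : ∫ x in s..t, g' x = g t - g s :=
    intervalIntegral.integral_eq_sub_of_hasDerivAt
      (fun x hx => hg' x (hsub (hst hx))) hg'int_st
  -- Cauchy–Schwarz bound on the derivative term
  have hs1 : a ≤ s := hs.1
  have hs2 : s ≤ a + 1 := hs.2
  have hCS : (∫ x in s..t, g' x) ^ 2 ≤ ∫ x in (-1 : ℝ)..1, g' x ^ 2 := by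
    rcases le_total s t with h | h
    · have h5 := cs_aux_s7 h hg'int_st hg'2int_st
      have h6 : (∫ x in s..t, g' x ^ 2) ≤ ∫ x in (-1 : ℝ)..1, g' x ^ 2 :=
        intervalIntegral.integral_mono_interval (by linarith) h (by linarith)
          (Filter.Eventually.of_forall fun x => sq_nonneg _) hint_g'2
      have h7 : 0 ≤ ∫ x in s..t, g' x ^ 2 :=
        intervalIntegral.integral_nonneg h (fun x _ => sq_nonneg _)
      nlinarith
    · have h5 := cs_aux_s7 h hg'int_st.symm hg'2int_st.symm
      have h6 : (∫ x in t..s, g' x ^ 2) ≤ ∫ x in (-1 : ℝ)..1, g' x ^ 2 :=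
        intervalIntegral.integral_mono_interval (by linarith) h (by linarith)
          (Filter.Eventually.of_forall fun x => sq_nonneg _) hint_g'2
      have h7 : 0 ≤ ∫ x in t..s, g' x ^ 2 :=
        intervalIntegral.integral_nonneg h (fun x _ => sq_nonneg _)
      have h8 : (∫ x in s..t, g' x) = -(∫ x in t..s, g' x) :=
        intervalIntegral.integral_symm t s
      rw [h8, neg_pow]
      nlinarith
  have hder_le : |∫ x in s..t, g' x| ≤ Real.sqrt (∫ x in (-1 : ℝ)..1, g' x ^ 2) := by
    rw [← Real.sqrt_sq_eq_abs]
    exact Real.sqrt_le_sqrt hCS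
  -- combine
  have : g t = g s + ∫ x in s..t, g' x := by rw [hftc]; ring
  rw [this]
  calc |g s + ∫ x in s..t, g' x| ≤ |g s| + |∫ x in s..t, g' x| := abs_add_le _ _
    _ ≤ Real.sqrt (∫ x in (-1 : ℝ)..1, g x ^ 2) +
        Real.sqrt (∫ x in (-1 : ℝ)..1, g' x ^ 2) := add_le_add hgs_le hder_le
end

section
/- Let f : ℝ → ℝ be twice differentiable, q-Lipschitz continuous, with |f''(t)| ≤ ν for all t ∈ ℝ, and let u : ℝ → ℝ be twice continuously differentiable on [−1, 1]. Set T := u(−1)² + u'(−1)² + ∫_{−1}^1 u''(t)² dt. Then ∫_{−1}^1 ((f∘u)''(t))² dt ≤ (q² + ν²)·(73·T + 21316·T²), where 21316 = 4·73². -/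
/-!
Inside `(-1, 1)` the chain rule gives `(f ∘ u)'' = f''(u) u'² + f'(u) u''`, where
`|f'| ≤ q` by the Lipschitz bound and `|f''| ≤ ν`. From `u'(t) = u'(-1) + ∫_{-1}^t u''` and
Cauchy–Schwarz, `u'(t)² ≤ 2 u'(-1)² + 4 ∫ u''² ≤ 4T`, hence
`((f ∘ u)'')² ≤ 32 ν² T² + 2 q² u''²`. Integrating gives `64 ν² T² + 2 q² T`, which is well
below the stated bound.
-/

open Set MeasureTheory Filter Topology

lemma abs_deriv_le_of_abs_sub_le {f : ℝ → ℝ} {q : ℝ}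
    (hf : ∀ s t : ℝ, |f s - f t| ≤ q * |s - t|) (x : ℝ) : |deriv f x| ≤ q := by
  have hq : 0 ≤ q := by simpa using (abs_nonneg _).trans (hf 1 0)
  simpa using norm_deriv_le_of_lip' (f := f) (x₀ := x) hq
    (Eventually.of_forall fun s => by simpa using hf s x)

lemma deriv_deriv_comp {f u u' : ℝ → ℝ} {u'' t : ℝ} (hf : Differentiable ℝ f)
    (hf' : DifferentiableAt ℝ (deriv f) (u t)) (hu' : ∀ᶠ s in 𝓝 t, HasDerivAt u (u' s) s)
    (hu'' : HasDerivAt u' u'' t) :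
    deriv (deriv (f ∘ u)) t = deriv (deriv f) (u t) * u' t ^ 2 + deriv f (u t) * u'' := by
  have hderiv : deriv (f ∘ u) =ᶠ[𝓝 t] fun s => deriv f (u s) * u' s := by
    filter_upwards [hu'] with s hs
    exact ((hf (u s)).hasDerivAt.comp s hs).deriv
  rw [hderiv.deriv_eq]
  refine ((hf'.hasDerivAt.comp t hu'.self_of_nhds).mul hu'').deriv.trans ?_
  simp only [Function.comp_apply]
  ring

lemma sq_mul_sq_add_mul_le {a b x y ν q M : ℝ} (ha : |a| ≤ ν) (hb : |b| ≤ q) (hx : x ^ 2 ≤ M) :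
    (a * x ^ 2 + b * y) ^ 2 ≤ 2 * ν ^ 2 * M ^ 2 + 2 * q ^ 2 * y ^ 2 := by
  have ha2 : a ^ 2 ≤ ν ^ 2 := sq_le_sq' (abs_le.mp ha).1 (abs_le.mp ha).2
  have hb2 : b ^ 2 ≤ q ^ 2 := sq_le_sq' (abs_le.mp hb).1 (abs_le.mp hb).2
  have hx4 : (x ^ 2) ^ 2 ≤ M ^ 2 := pow_le_pow_left₀ (sq_nonneg x) hx 2
  calc (a * x ^ 2 + b * y) ^ 2 ≤ 2 * ((a * x ^ 2) ^ 2 + (b * y) ^ 2) := add_sq_le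
    _ = 2 * (a ^ 2 * (x ^ 2) ^ 2) + 2 * (b ^ 2 * y ^ 2) := by ring
    _ ≤ 2 * (ν ^ 2 * M ^ 2) + 2 * (q ^ 2 * y ^ 2) := by gcongr
    _ = 2 * ν ^ 2 * M ^ 2 + 2 * q ^ 2 * y ^ 2 := by ring

lemma sq_intervalIntegral_le {g : ℝ → ℝ} {a b : ℝ} (hab : a ≤ b)
    (hg : IntervalIntegrable g volume a b)
    (hg2 : IntervalIntegrable (fun t => g t ^ 2) volume a b) :
    (∫ t in a..b, g t) ^ 2 ≤ (b - a) * ∫ t in a..b, g t ^ 2 := by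
  set I := ∫ t in a..b, g t
  set S := ∫ t in a..b, g t ^ 2
  -- integrate `2 c g ≤ g² + c²`, then take `c` to be the mean of `g`
  have hamgm : ∀ c : ℝ, 2 * c * I ≤ S + c ^ 2 * (b - a) := fun c => by
    have := intervalIntegral.integral_mono_on (g := fun t => g t ^ 2 + c ^ 2) hab
      (hg.const_mul (2 * c)) (hg2.add intervalIntegrable_const) fun t _ => by
        nlinarith [sq_nonneg (g t - c)]
    simpa [intervalIntegral.integral_const_mul, intervalIntegral.integral_add hg2
      intervalIntegrable_const, mul_comm] using this
  rcases hab.eq_or_lt with rfl | hlt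
  · simp [I]
  · have h := hamgm (I / (b - a))
    have hL : 0 < b - a := sub_pos.mpr hlt
    field_simp at h
    nlinarith

lemma sq_le_of_hasDerivAt {g g' : ℝ → ℝ} {a b t : ℝ} (ht : t ∈ Icc a b)
    (hderiv : ∀ s ∈ Icc a b, HasDerivAt g (g' s) s) (hg' : IntervalIntegrable g' volume a b)
    (hg'2 : IntervalIntegrable (fun s => g' s ^ 2) volume a b) :
    g t ^ 2 ≤ 2 * g a ^ 2 + 2 * (b - a) * ∫ s in a..b, g' s ^ 2 := by
  have hsub : uIcc a t ⊆ uIcc a b := uIcc_subset_uIcc_left (Icc_subset_uIcc ht)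
  have hftc : ∫ s in a..t, g' s = g t - g a :=
    intervalIntegral.integral_eq_sub_of_hasDerivAt
      (fun s hs => hderiv s (by simpa [uIcc_of_le (ht.1.trans ht.2)] using hsub hs))
      (hg'.mono_set hsub)
  have hcs := sq_intervalIntegral_le ht.1 (hg'.mono_set hsub) (hg'2.mono_set hsub)
  have hmono : ∫ s in a..t, g' s ^ 2 ≤ ∫ s in a..b, g' s ^ 2 :=
    intervalIntegral.integral_mono_interval le_rfl ht.1 ht.2
      (Eventually.of_forall fun s => sq_nonneg _) hg'2
  have hS : 0 ≤ ∫ s in a..t, g' s ^ 2 :=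
    intervalIntegral.integral_nonneg ht.1 fun s _ => sq_nonneg _
  calc g t ^ 2 = (g a + ∫ s in a..t, g' s) ^ 2 := by rw [hftc]; ring
    _ ≤ 2 * (g a ^ 2 + (∫ s in a..t, g' s) ^ 2) := add_sq_le
    _ ≤ 2 * (g a ^ 2 + (b - a) * ∫ s in a..b, g' s ^ 2) := by
        gcongr
        calc _ ≤ (t - a) * ∫ s in a..t, g' s ^ 2 := hcs
          _ ≤ (b - a) * ∫ s in a..b, g' s ^ 2 :=
              mul_le_mul (by linarith [ht.2]) hmono hS (by linarith [ht.1, ht.2])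
    _ = 2 * g a ^ 2 + 2 * (b - a) * ∫ s in a..b, g' s ^ 2 := by ring

lemma intervalIntegral_mono_of_nonneg_of_le_Ioo {f g : ℝ → ℝ} {a b : ℝ} (hab : a ≤ b)
    (hf : ∀ t ∈ Ioo a b, 0 ≤ f t) (hg : IntervalIntegrable g volume a b)
    (h : ∀ t ∈ Ioo a b, f t ≤ g t) : ∫ t in a..b, f t ≤ ∫ t in a..b, g t := by
  simp only [intervalIntegral.integral_of_le hab, integral_Ioc_eq_integral_Ioo]
  exact integral_mono_of_nonneg (ae_restrict_of_forall_mem measurableSet_Ioo hf)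
    (hg.1.mono_set Ioo_subset_Ioc_self) (ae_restrict_of_forall_mem measurableSet_Ioo h)

/-- For `f` twice differentiable, `q`-Lipschitz with `|f''| ≤ ν` everywhere, and `u`
twice continuously differentiable on `[−1, 1]`, setting
`T := u(−1)² + u'(−1)² + ∫ (u'')²`, one has
`∫ ((f∘u)'')² ≤ (q² + ν²)·(73·T + 21316·T²)`. -/
theorem stmt11 (f : ℝ → ℝ) (q ν : ℝ)
    (hfd : Differentiable ℝ f) (hfd' : Differentiable ℝ (deriv f))
    (hf : ∀ s t : ℝ, |f s - f t| ≤ q * |s - t|)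
    (hf'' : ∀ t : ℝ, |deriv (deriv f) t| ≤ ν)
    (u u' u'' : ℝ → ℝ)
    (hu' : ∀ t ∈ Set.Icc (-1 : ℝ) 1, HasDerivAt u (u' t) t)
    (hu'' : ∀ t ∈ Set.Icc (-1 : ℝ) 1, HasDerivAt u' (u'' t) t)
    (hc : ContinuousOn u'' (Set.Icc (-1 : ℝ) 1))
    (T : ℝ) (hT : T = u (-1) ^ 2 + u' (-1) ^ 2 + ∫ t in (-1 : ℝ)..1, u'' t ^ 2) :
    (∫ t in (-1 : ℝ)..1, (deriv (deriv (f ∘ u)) t) ^ 2) ≤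
      (q ^ 2 + ν ^ 2) * (73 * T + 21316 * T ^ 2) := by
  set S := ∫ t in (-1 : ℝ)..1, u'' t ^ 2
  have hS : 0 ≤ S := intervalIntegral.integral_nonneg (by norm_num) fun t _ => sq_nonneg _
  have hST : S ≤ T := by nlinarith [sq_nonneg (u (-1)), sq_nonneg (u' (-1))]
  have hu''_int : IntervalIntegrable u'' volume (-1) 1 := hc.intervalIntegrable_of_Icc (by norm_num)
  have hu''_sq_int : IntervalIntegrable (fun t => u'' t ^ 2) volume (-1) 1 :=
    (hc.pow 2).intervalIntegrable_of_Icc (by norm_num)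
  have hu'_sq : ∀ t ∈ Icc (-1 : ℝ) 1, u' t ^ 2 ≤ 4 * T := fun t ht => by
    have := sq_le_of_hasDerivAt ht hu'' hu''_int hu''_sq_int
    nlinarith [sq_nonneg (u (-1))]
  have hpointwise : ∀ t ∈ Ioo (-1 : ℝ) 1,
      deriv (deriv (f ∘ u)) t ^ 2 ≤ 2 * ν ^ 2 * (4 * T) ^ 2 + 2 * q ^ 2 * u'' t ^ 2 :=
    fun t ht => by
      have hnhds : ∀ᶠ s in 𝓝 t, s ∈ Icc (-1 : ℝ) 1 := Icc_mem_nhds ht.1 ht.2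
      rw [deriv_deriv_comp hfd (hfd' _) (hnhds.mono hu') (hu'' t (Ioo_subset_Icc_self ht))]
      exact sq_mul_sq_add_mul_le (hf'' _) (abs_deriv_le_of_abs_sub_le hf _)
        (hu'_sq t (Ioo_subset_Icc_self ht))
  calc ∫ t in (-1 : ℝ)..1, deriv (deriv (f ∘ u)) t ^ 2
      ≤ ∫ t in (-1 : ℝ)..1, (2 * ν ^ 2 * (4 * T) ^ 2 + 2 * q ^ 2 * u'' t ^ 2) :=
        intervalIntegral_mono_of_nonneg_of_le_Ioo (by norm_num) (fun t _ => sq_nonneg _)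
          (intervalIntegrable_const.add (hu''_sq_int.const_mul _)) hpointwise
    _ = 64 * ν ^ 2 * T ^ 2 + 2 * q ^ 2 * S := by
        rw [intervalIntegral.integral_add intervalIntegrable_const (hu''_sq_int.const_mul _),
          intervalIntegral.integral_const, intervalIntegral.integral_const_mul, smul_eq_mul]
        ring
    _ ≤ (q ^ 2 + ν ^ 2) * (73 * T + 21316 * T ^ 2) := by
        nlinarith [mul_nonneg (sq_nonneg q) hS, mul_nonneg (sq_nonneg q) (sq_nonneg T),
          mul_nonneg (sq_nonneg ν) (sq_nonneg T), mul_nonneg (sq_nonneg ν) (hS.trans hST)]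
end

section
/- Let n and p be positive integers, M a real n × p matrix such that MᵀM is invertible, Φ a real symmetric positive definite p × p matrix, λ ≥ 0 a real number, and x ∈ ℝⁿ. Define ξ := (MᵀM + λΦ)⁻¹Mᵀx and ξ̃ := (MᵀM)⁻¹Mᵀx. Then ‖ξ‖² ≤ (λ_max(Φ)/λ_min(Φ))·‖ξ̃‖², where λ_max(Φ) and λ_min(Φ) are the largest and smallest eigenvalues of Φ and ‖·‖ denotes the Euclidean norm. -/
/-!
Put `A = MᵀM` and `b = Mᵀx`, so that `A ξ̃ = b = (A + λΦ) ξ`. For `d = ξ̃ - ξ` this gives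
`A d = λ Φ ξ`, hence `λ · dᵀΦξ = dᵀAd ≥ 0`, and therefore
`ξ̃ᵀΦξ̃ = ξᵀΦξ + 2 dᵀΦξ + dᵀΦd ≥ ξᵀΦξ`. The Rayleigh bounds
`λ_min(Φ) ‖v‖² ≤ vᵀΦv ≤ λ_max(Φ) ‖v‖²` turn this into the claimed inequality.
-/

open Matrix

namespace Matrix

variable {n : Type*} [Fintype n]

open scoped MatrixOrder in
lemma dotProduct_mulVec_le_of_le {A B : Matrix n n ℝ} (h : A ≤ B) (v : n → ℝ) :
    v ⬝ᵥ (A *ᵥ v) ≤ v ⬝ᵥ (B *ᵥ v) := by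
  simpa [sub_mulVec] using (le_iff.mp h).dotProduct_mulVec_nonneg v

lemma PosSemidef.dotProduct_mulVec_le_of_mulVec_eq_add_smul {A Φ : Matrix n n ℝ}
    (hA : A.PosSemidef) (hΦ : Φ.PosSemidef) {l : ℝ} (hl : 0 < l) {ξ ζ : n → ℝ}
    (h : A *ᵥ ζ = A *ᵥ ξ + l • Φ *ᵥ ξ) : ξ ⬝ᵥ (Φ *ᵥ ξ) ≤ ζ ⬝ᵥ (Φ *ᵥ ζ) := by
  set d := ζ - ξ
  have hAd : A *ᵥ d = l • Φ *ᵥ ξ := by rw [mulVec_sub, h]; abel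
  have hcross : 0 ≤ d ⬝ᵥ (Φ *ᵥ ξ) := by
    have hdAd := hA.dotProduct_mulVec_nonneg d
    rw [star_trivial, hAd, dotProduct_smul, smul_eq_mul] at hdAd
    exact nonneg_of_mul_nonneg_right hdAd hl
  have hsymm : ξ ⬝ᵥ (Φ *ᵥ d) = d ⬝ᵥ (Φ *ᵥ ξ) := by
    rw [dotProduct_mulVec, ← mulVec_transpose, ← conjTranspose_eq_transpose_of_trivial,
      hΦ.1.eq, dotProduct_comm]
  have hdΦd : 0 ≤ d ⬝ᵥ (Φ *ᵥ d) := by simpa using hΦ.dotProduct_mulVec_nonneg d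
  have hζ : ζ = ξ + d := by simp [d]
  rw [hζ, mulVec_add, dotProduct_add, add_dotProduct, add_dotProduct, hsymm]
  linarith

variable [DecidableEq n] {A : Matrix n n ℝ}

lemma dotProduct_algebraMap_mulVec (c : ℝ) (v : n → ℝ) :
    v ⬝ᵥ (algebraMap ℝ (Matrix n n ℝ) c *ᵥ v) = c * (v ⬝ᵥ v) := by
  simp [Algebra.algebraMap_eq_smul_one, smul_mulVec]

open scoped MatrixOrder in
lemma IsHermitian.iInf_eigenvalues_mul_dotProduct_self_le (hA : A.IsHermitian) (v : n → ℝ) :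
    (⨅ i, hA.eigenvalues i) * (v ⬝ᵥ v) ≤ v ⬝ᵥ (A *ᵥ v) := by
  rw [← dotProduct_algebraMap_mulVec]
  refine dotProduct_mulVec_le_of_le ?_ v
  rw [algebraMap_le_iff_le_spectrum (ha := hA.isSelfAdjoint),
    hA.spectrum_real_eq_range_eigenvalues]
  rintro _ ⟨i, rfl⟩
  exact ciInf_le (Set.finite_range _).bddBelow i

open scoped MatrixOrder in
lemma IsHermitian.dotProduct_mulVec_le_iSup_eigenvalues_mul (hA : A.IsHermitian) (v : n → ℝ) :
    v ⬝ᵥ (A *ᵥ v) ≤ (⨆ i, hA.eigenvalues i) * (v ⬝ᵥ v) := by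
  rw [← dotProduct_algebraMap_mulVec]
  refine dotProduct_mulVec_le_of_le ?_ v
  rw [le_algebraMap_iff_spectrum_le (ha := hA.isSelfAdjoint),
    hA.spectrum_real_eq_range_eigenvalues]
  rintro _ ⟨i, rfl⟩
  exact le_ciSup (Set.finite_range _).bddAbove i

lemma PosDef.iInf_eigenvalues_pos [Nonempty n] (hA : A.PosDef) :
    0 < ⨅ i, hA.1.eigenvalues i := by
  obtain ⟨i, hi⟩ := exists_eq_ciInf_of_finite (f := hA.1.eigenvalues)
  exact hi ▸ hA.eigenvalues_pos i

end Matrix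

theorem stmt13_general (n p : ℕ)
    (M : Matrix (Fin n) (Fin p) ℝ) (hM : IsUnit (Mᵀ * M))
    (Φ : Matrix (Fin p) (Fin p) ℝ) (hΦ : Φ.PosDef)
    (l : ℝ) (hl : 0 ≤ l) (x : Fin n → ℝ) :
    ∑ i, ((Mᵀ * M + l • Φ)⁻¹ *ᵥ (Mᵀ *ᵥ x)) i ^ 2 ≤
      ((⨆ i, hΦ.1.eigenvalues i) / (⨅ i, hΦ.1.eigenvalues i)) *
        ∑ i, ((Mᵀ * M)⁻¹ *ᵥ (Mᵀ *ᵥ x)) i ^ 2 := by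
  rcases isEmpty_or_nonempty (Fin p) with hp | hp
  · simp
  set A := Mᵀ * M
  set ξ := (A + l • Φ)⁻¹ *ᵥ (Mᵀ *ᵥ x)
  set ζ := A⁻¹ *ᵥ (Mᵀ *ᵥ x)
  have hA : A.PosSemidef := by simpa using posSemidef_conjTranspose_mul_self M
  have hΦξζ : ξ ⬝ᵥ (Φ *ᵥ ξ) ≤ ζ ⬝ᵥ (Φ *ᵥ ζ) := by
    rcases hl.eq_or_lt with rfl | hl
    · simp [ξ, ζ]
    have hC : IsUnit (A + l • Φ) := (PosDef.posSemidef_add hA (hΦ.smul hl)).isUnit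
    have hζ : A *ᵥ ζ = Mᵀ *ᵥ x := by
      rw [mulVec_mulVec, mul_nonsing_inv _ ((isUnit_iff_isUnit_det _).mp hM), one_mulVec]
    have hξ : (A + l • Φ) *ᵥ ξ = Mᵀ *ᵥ x := by
      rw [mulVec_mulVec, mul_nonsing_inv _ ((isUnit_iff_isUnit_det _).mp hC), one_mulVec]
    refine hA.dotProduct_mulVec_le_of_mulVec_eq_add_smul hΦ.posSemidef hl ?_
    rw [hζ, ← hξ, add_mulVec, smul_mulVec]
  have hsum_sq (v : Fin p → ℝ) : ∑ i, v i ^ 2 = v ⬝ᵥ v := by simp [dotProduct, sq]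
  rw [hsum_sq, hsum_sq, div_mul_eq_mul_div, le_div_iff₀ hΦ.iInf_eigenvalues_pos, mul_comm]
  calc _ ≤ ξ ⬝ᵥ (Φ *ᵥ ξ) := hΦ.1.iInf_eigenvalues_mul_dotProduct_self_le ξ
    _ ≤ ζ ⬝ᵥ (Φ *ᵥ ζ) := hΦξζ
    _ ≤ _ := hΦ.1.dotProduct_mulVec_le_iSup_eigenvalues_mul ζ

/-- For an `n × p` real matrix `M` with `MᵀM` invertible, a symmetric positive
definite `p × p` matrix `Φ`, `λ ≥ 0` and `x ∈ ℝⁿ`, the ridge solution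
`ξ = (MᵀM + λΦ)⁻¹Mᵀx` and least-squares solution `ξ̃ = (MᵀM)⁻¹Mᵀx` satisfy
`‖ξ‖² ≤ (λ_max(Φ)/λ_min(Φ))·‖ξ̃‖²`. -/
theorem stmt13 (n p : ℕ) (hn : 0 < n) (hp : 0 < p)
    (M : Matrix (Fin n) (Fin p) ℝ) (hM : IsUnit (Mᵀ * M))
    (Φ : Matrix (Fin p) (Fin p) ℝ) (hΦ : Φ.PosDef)
    (l : ℝ) (hl : 0 ≤ l) (x : Fin n → ℝ) :
    ∑ i, ((Mᵀ * M + l • Φ)⁻¹ *ᵥ (Mᵀ *ᵥ x)) i ^ 2 ≤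
      ((⨆ i, hΦ.1.eigenvalues i) / (⨅ i, hΦ.1.eigenvalues i)) *
        ∑ i, ((Mᵀ * M)⁻¹ *ᵥ (Mᵀ *ᵥ x)) i ^ 2 :=
  stmt13_general n p M hM Φ hΦ l hl x
end

section
/- Let n and p be positive integers, M a real n × p matrix such that MᵀM is invertible, Φ a real symmetric positive definite p × p matrix, λ ≥ 0 a real number, and x ∈ ℝⁿ. Define ξ := (MᵀM + λΦ)⁻¹Mᵀx and ξ̃ := (MᵀM)⁻¹Mᵀx. Then ξᵀΦξ ≤ ξ̃ᵀΦξ̃; that is, the Φ-weighted norm of the ridge solution is at most the Φ-weighted norm of the least-squares solution. -/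
open Matrix

/-!
Write `A = MᵀM`, `B = A + λΦ`, `v = A⁻¹Mᵀx` and `ξ = B⁻¹Mᵀx`. From `Av = Bξ` one gets
`v = ξ + λw` with `w = B⁻¹Φv`. Pairing `Bw = Φv` with `w` shows that the cross term `wᵀΦξ`
equals `wᵀAw ≥ 0`, so `vᵀΦv = ξᵀΦξ + 2λ wᵀAw + λ² wᵀΦw ≥ ξᵀΦξ`.
-/

namespace Matrix

variable {ι : Type*} [Fintype ι]

lemma IsSymm.dotProduct_mulVec_comm {R : Type*} [CommSemiring R] {Φ : Matrix ι ι R}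
    (hΦ : Φ.IsSymm) (y z : ι → R) : y ⬝ᵥ (Φ *ᵥ z) = z ⬝ᵥ (Φ *ᵥ y) := by
  rw [dotProduct_mulVec, ← mulVec_transpose, hΦ.eq, dotProduct_comm]

lemma PosSemidef.dotProduct_mulVec_nonneg_real {A : Matrix ι ι ℝ} (hA : A.PosSemidef)
    (x : ι → ℝ) : 0 ≤ x ⬝ᵥ (A *ᵥ x) := by
  simpa using hA.dotProduct_mulVec_nonneg x

lemma mulVec_nonsing_inv_mulVec [DecidableEq ι] {A : Matrix ι ι ℝ} (hA : IsUnit A)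
    (b : ι → ℝ) : A *ᵥ (A⁻¹ *ᵥ b) = b := by
  rw [mulVec_mulVec, mul_nonsing_inv _ ((isUnit_iff_isUnit_det A).mp hA), one_mulVec]

theorem dotProduct_mulVec_le_of_add_smul_mulVec_eq {A Φ : Matrix ι ι ℝ} (hA : A.PosSemidef)
    (hΦ : Φ.PosSemidef) {l : ℝ} (hl : 0 ≤ l) {ξ w : ι → ℝ}
    (hw : (A + l • Φ) *ᵥ w = Φ *ᵥ (ξ + l • w)) :
    ξ ⬝ᵥ (Φ *ᵥ ξ) ≤ (ξ + l • w) ⬝ᵥ (Φ *ᵥ (ξ + l • w)) := by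
  have hcross : w ⬝ᵥ (Φ *ᵥ ξ) = w ⬝ᵥ (A *ᵥ w) := by
    have h := congrArg (w ⬝ᵥ ·) hw
    simp only [add_mulVec, smul_mulVec, mulVec_add, mulVec_smul, dotProduct_add,
      dotProduct_smul, smul_eq_mul] at h
    linarith
  have hexpand : (ξ + l • w) ⬝ᵥ (Φ *ᵥ (ξ + l • w)) =
      ξ ⬝ᵥ (Φ *ᵥ ξ) + 2 * l * (w ⬝ᵥ (A *ᵥ w)) + l ^ 2 * (w ⬝ᵥ (Φ *ᵥ w)) := by
    simp only [mulVec_add, mulVec_smul, dotProduct_add, add_dotProduct, dotProduct_smul,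
      smul_dotProduct, smul_eq_mul]
    rw [(isHermitian_iff_isSymm.mp hΦ.isHermitian).dotProduct_mulVec_comm ξ w, hcross]
    ring
  have hAw := hA.dotProduct_mulVec_nonneg_real w
  have hΦw := hΦ.dotProduct_mulVec_nonneg_real w
  rw [hexpand]
  nlinarith [mul_nonneg hl hAw, mul_nonneg (sq_nonneg l) hΦw]

theorem dotProduct_mulVec_ridge_le [DecidableEq ι] {A Φ : Matrix ι ι ℝ} (hA : A.PosDef)
    (hΦ : Φ.PosSemidef) {l : ℝ} (hl : 0 ≤ l) (b : ι → ℝ) :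
    ((A + l • Φ)⁻¹ *ᵥ b) ⬝ᵥ (Φ *ᵥ ((A + l • Φ)⁻¹ *ᵥ b)) ≤
      (A⁻¹ *ᵥ b) ⬝ᵥ (Φ *ᵥ (A⁻¹ *ᵥ b)) := by
  set B := A + l • Φ
  have hB : IsUnit B := (hA.add_posSemidef (hΦ.smul hl)).isUnit
  set v := A⁻¹ *ᵥ b
  set ξ := B⁻¹ *ᵥ b
  set w := B⁻¹ *ᵥ (Φ *ᵥ v)
  have hw : B *ᵥ w = Φ *ᵥ v := mulVec_nonsing_inv_mulVec hB _
  have hv : v = ξ + l • w := mulVec_injective_of_isUnit hB <| by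
    rw [mulVec_add, mulVec_smul, hw, mulVec_nonsing_inv_mulVec hB, add_mulVec, smul_mulVec,
      mulVec_nonsing_inv_mulVec hA.isUnit]
  rw [hv] at hw ⊢
  exact dotProduct_mulVec_le_of_add_smul_mulVec_eq hA.posSemidef hΦ hl hw

lemma posDef_transpose_mul_self_of_isUnit {m p : Type*} [Fintype m] [Fintype p]
    [DecidableEq p] {M : Matrix m p ℝ} (hM : IsUnit (Mᵀ * M)) : (Mᵀ * M).PosDef := by
  have hinj : Function.Injective M.mulVec := by
    refine Function.Injective.of_comp (f := Mᵀ.mulVec) ?_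
    simpa only [Function.comp_def, mulVec_mulVec] using mulVec_injective_of_isUnit hM
  simpa using PosDef.conjTranspose_mul_self M hinj

end Matrix

theorem stmt15_general (n p : ℕ)
    (M : Matrix (Fin n) (Fin p) ℝ) (hM : IsUnit (Mᵀ * M))
    (Φ : Matrix (Fin p) (Fin p) ℝ) (hΦ : Φ.PosDef)
    (l : ℝ) (hl : 0 ≤ l) (x : Fin n → ℝ) :
    ((Mᵀ * M + l • Φ)⁻¹ *ᵥ (Mᵀ *ᵥ x)) ⬝ᵥ (Φ *ᵥ ((Mᵀ * M + l • Φ)⁻¹ *ᵥ (Mᵀ *ᵥ x))) ≤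
      ((Mᵀ * M)⁻¹ *ᵥ (Mᵀ *ᵥ x)) ⬝ᵥ (Φ *ᵥ ((Mᵀ * M)⁻¹ *ᵥ (Mᵀ *ᵥ x))) :=
  dotProduct_mulVec_ridge_le (posDef_transpose_mul_self_of_isUnit hM) hΦ.posSemidef hl _

/-- For an `n × p` real matrix `M` with `MᵀM` invertible, a symmetric positive
definite `p × p` matrix `Φ`, `λ ≥ 0` and `x ∈ ℝⁿ`, the ridge solution
`ξ = (MᵀM + λΦ)⁻¹Mᵀx` and least-squares solution `ξ̃ = (MᵀM)⁻¹Mᵀx` satisfy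
`ξᵀΦξ ≤ ξ̃ᵀΦξ̃`. -/
theorem stmt15 (n p : ℕ) (hn : 0 < n) (hp : 0 < p)
    (M : Matrix (Fin n) (Fin p) ℝ) (hM : IsUnit (Mᵀ * M))
    (Φ : Matrix (Fin p) (Fin p) ℝ) (hΦ : Φ.PosDef)
    (l : ℝ) (hl : 0 ≤ l) (x : Fin n → ℝ) :
    ((Mᵀ * M + l • Φ)⁻¹ *ᵥ (Mᵀ *ᵥ x)) ⬝ᵥ (Φ *ᵥ ((Mᵀ * M + l • Φ)⁻¹ *ᵥ (Mᵀ *ᵥ x))) ≤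
      ((Mᵀ * M)⁻¹ *ᵥ (Mᵀ *ᵥ x)) ⬝ᵥ (Φ *ᵥ ((Mᵀ * M)⁻¹ *ᵥ (Mᵀ *ᵥ x))) :=
  stmt15_general n p M hM Φ hΦ l hl x
end
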